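/- Let A be a linear map from n×n real matrices into ℝ^m, let r ≤ n, and let P and Q be orthogonal projection matrices onto r-dimensional subspaces of ℝ^n. Suppose that for every Y in the null space of A one has ‖(I−P) Y (I−Q)‖_* ≥ ‖P Y Q‖_*. Then for every matrix Z whose column space equals the range of P and whose row space equals the range of Q, and for every Y in the null space of A, one has ‖Z + Y‖_* ≥ ‖Z‖_*. -/

import Mathlib

/-!
The nuclear norm is dual to the operator norm: `‖X‖_* = max tr (Bᵀ X)` over contractions `B`,
the maximum being attained at `B = ∑ σᵢ⁻¹ (X vᵢ) vᵢᵀ` for a singular system `(vᵢ, σᵢ)` of `X`.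
Gluing maximisers `B₁` for `P X Q` and `B₂` for `(1 - P) X (1 - Q)` into the contraction
`P B₁ Q + (1 - P) B₂ (1 - Q)` gives the pinching inequality
`‖P X Q‖_* + ‖(1 - P) X (1 - Q)‖_* ≤ ‖X‖_*`. For `X = Z + Y` we have `P X Q = Z + P Y Q` and
`(1 - P) X (1 - Q) = (1 - P) Y (1 - Q)`, so the triangle inequality and the hypothesis give
`‖Z‖_* ≤ ‖Z + P Y Q‖_* + ‖P Y Q‖_* ≤ ‖Z + P Y Q‖_* + ‖(1 - P) Y (1 - Q)‖_* ≤ ‖Z + Y‖_*`.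
-/

open Matrix

/-- The nuclear norm of a real matrix: the sum of its singular values,
i.e. the sum of the square roots of the eigenvalues of `Xᵀ * X`. -/
noncomputable def nuclearNorm {m n : Type*} [Fintype m] [Fintype n] [DecidableEq n]
    (X : Matrix m n ℝ) : ℝ :=
  ∑ i, Real.sqrt (((by simpa [Matrix.conjTranspose_eq_transpose_of_trivial] using
    Matrix.isHermitian_conjTranspose_mul_self X : (Xᵀ * X).IsHermitian)).eigenvalues i)

lemma isHermitian_transpose_mul_self {m n : Type*} [Fintype m] (X : Matrix m n ℝ) :
    (Xᵀ * X).IsHermitian := by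
  simpa [conjTranspose_eq_transpose_of_trivial] using isHermitian_conjTranspose_mul_self X

variable {l m n : Type*} [Fintype l] [Fintype m] [Fintype n]

lemma mulVec_dotProduct_mulVec {α : Type*} [CommSemiring α] (M : Matrix l m α)
    (N : Matrix l n α) (x : m → α) (y : n → α) :
    (M *ᵥ x) ⬝ᵥ (N *ᵥ y) = x ⬝ᵥ (Mᵀ * N) *ᵥ y := by
  rw [← mulVec_mulVec, dotProduct_transpose_mulVec, dotProduct_comm]

lemma dotProduct_self_nonneg (v : n → ℝ) : 0 ≤ v ⬝ᵥ v :=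
  Finset.sum_nonneg fun i _ => mul_self_nonneg (v i)

lemma dotProduct_le_of_dotProduct_self_le {x y : n → ℝ} {s : ℝ} (hx : x ⬝ᵥ x ≤ 1)
    (hy : y ⬝ᵥ y = s ^ 2) (hs : 0 ≤ s) : x ⬝ᵥ y ≤ s := by
  refine le_of_sq_le_sq ?_ hs
  calc (x ⬝ᵥ y) ^ 2 ≤ (x ⬝ᵥ x) * (y ⬝ᵥ y) := by
        simpa only [dotProduct, pow_two] using Finset.sum_mul_sq_le_sq_mul_sq Finset.univ x y
    _ ≤ 1 * s ^ 2 := by rw [hy]; gcongr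
    _ = s ^ 2 := one_mul _

lemma sum_smul_dotProduct_sum_smul_le {ι : Type*} [Fintype ι] (c : ι → ℝ) (u : ι → n → ℝ)
    (hu : ∀ i j, i ≠ j → u i ⬝ᵥ u j = 0) (hu₁ : ∀ i, u i ⬝ᵥ u i ≤ 1) :
    (∑ i, c i • u i) ⬝ᵥ (∑ i, c i • u i) ≤ ∑ i, c i ^ 2 := by
  have hdiag : ∀ i, (∑ j, c j • u j) ⬝ᵥ (c i • u i) = c i ^ 2 * (u i ⬝ᵥ u i) := fun i => by
    rw [sum_dotProduct, Finset.sum_eq_single i (fun j _ hji => by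
      rw [smul_dotProduct, dotProduct_smul, hu j i hji, smul_zero, smul_zero]) (by simp)]
    simp only [smul_dotProduct, dotProduct_smul, smul_eq_mul]
    ring
  rw [dotProduct_sum]
  simp only [hdiag]
  exact Finset.sum_le_sum fun i _ => mul_le_of_le_one_right (sq_nonneg _) (hu₁ i)

def IsContraction (B : Matrix m n ℝ) : Prop :=
  ∀ v : n → ℝ, (B *ᵥ v) ⬝ᵥ (B *ᵥ v) ≤ v ⬝ᵥ v

namespace IsContraction

lemma mul {B : Matrix l m ℝ} {C : Matrix m n ℝ} (hB : IsContraction B) (hC : IsContraction C) :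
    IsContraction (B * C) := fun v => by
  rw [← mulVec_mulVec]
  exact (hB _).trans (hC v)

end IsContraction

section StarProjection

variable {P : Matrix n n ℝ}

lemma IsStarProjection.transpose_eq (hP : IsStarProjection P) : Pᵀ = P := by
  have := hP.isSelfAdjoint
  rwa [IsSelfAdjoint, star_eq_conjTranspose, conjTranspose_eq_transpose_of_trivial] at this

lemma isStarProjection_of_transpose_eq (hPt : Pᵀ = P) (hPP : P * P = P) : IsStarProjection P :=
  ⟨hPP, by rw [IsSelfAdjoint, star_eq_conjTranspose, conjTranspose_eq_transpose_of_trivial, hPt]⟩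

lemma IsStarProjection.mulVec_dotProduct_mulVec_self (hP : IsStarProjection P) (v : n → ℝ) :
    (P *ᵥ v) ⬝ᵥ (P *ᵥ v) = v ⬝ᵥ P *ᵥ v := by
  rw [mulVec_dotProduct_mulVec, hP.transpose_eq, hP.isIdempotentElem.eq]

variable [DecidableEq n]

lemma IsStarProjection.mulVec_dotProduct_one_sub_mulVec (hP : IsStarProjection P)
    (x y : n → ℝ) : (P *ᵥ x) ⬝ᵥ ((1 - P) *ᵥ y) = 0 := by
  rw [mulVec_dotProduct_mulVec, hP.transpose_eq, hP.isIdempotentElem.mul_one_sub_self,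
    zero_mulVec, dotProduct_zero]

lemma IsStarProjection.dotProduct_add_dotProduct_one_sub (hP : IsStarProjection P)
    (v : n → ℝ) :
    (P *ᵥ v) ⬝ᵥ (P *ᵥ v) + ((1 - P) *ᵥ v) ⬝ᵥ ((1 - P) *ᵥ v) = v ⬝ᵥ v := by
  rw [hP.mulVec_dotProduct_mulVec_self, hP.one_sub.mulVec_dotProduct_mulVec_self, sub_mulVec,
    one_mulVec, dotProduct_sub]
  ring

lemma IsStarProjection.isContraction (hP : IsStarProjection P) : IsContraction P := fun v => by
  linarith [hP.dotProduct_add_dotProduct_one_sub v, dotProduct_self_nonneg ((1 - P) *ᵥ v)]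

end StarProjection

/-- `sum_vecMulVec` says that the square matrix with columns `vec i` is orthogonal, i.e. that
the `vec i` form an orthonormal basis. -/
structure SingularSystem [DecidableEq n] (X : Matrix m n ℝ) where
  vec : n → n → ℝ
  val : n → ℝ
  sum_vecMulVec : ∑ i, vecMulVec (vec i) (vec i) = 1
  val_nonneg : ∀ i, 0 ≤ val i
  dotProduct_mulVec_vec : ∀ i j,
    (X *ᵥ vec i) ⬝ᵥ (X *ᵥ vec j) = if i = j then val i ^ 2 else 0

namespace SingularSystem

variable [DecidableEq n] {X : Matrix m n ℝ} (s : SingularSystem X)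

lemma trace_eq (M : Matrix n n ℝ) : trace M = ∑ i, s.vec i ⬝ᵥ M *ᵥ s.vec i := by
  conv_lhs => rw [← mul_one M, ← s.sum_vecMulVec, Finset.mul_sum, trace_sum]
  simp only [mul_vecMulVec, trace_vecMulVec, dotProduct_comm]

lemma sum_sq_dotProduct (w : n → ℝ) : ∑ i, (s.vec i ⬝ᵥ w) ^ 2 = w ⬝ᵥ w := by
  conv_rhs => arg 2; rw [← one_mulVec w, ← s.sum_vecMulVec, sum_mulVec]
  simp only [vecMulVec_mulVec, op_smul_eq_smul, dotProduct_comm w, sum_dotProduct,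
    smul_dotProduct, smul_eq_mul, sq]

lemma dotProduct_vec_self_le_one (i : n) : s.vec i ⬝ᵥ s.vec i ≤ 1 := by
  have h : (s.vec i ⬝ᵥ s.vec i) ^ 2 ≤ s.vec i ⬝ᵥ s.vec i := by
    conv_rhs => rw [← s.sum_sq_dotProduct]
    exact Finset.single_le_sum (f := fun j => (s.vec j ⬝ᵥ s.vec i) ^ 2)
      (fun j _ => sq_nonneg _) (Finset.mem_univ i)
  nlinarith [dotProduct_self_nonneg (s.vec i)]

lemma trace_transpose_mul_le {B : Matrix m n ℝ} (hB : IsContraction B) :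
    trace (Bᵀ * X) ≤ ∑ i, s.val i := by
  rw [s.trace_eq]
  refine Finset.sum_le_sum fun i _ => ?_
  rw [← mulVec_dotProduct_mulVec]
  refine dotProduct_le_of_dotProduct_self_le ((hB _).trans (s.dotProduct_vec_self_le_one i)) ?_
    (s.val_nonneg i)
  simpa using s.dotProduct_mulVec_vec i i

lemma exists_isContraction_trace_transpose_mul_eq :
    ∃ B : Matrix m n ℝ, IsContraction B ∧ trace (Bᵀ * X) = ∑ i, s.val i := by
  -- `0⁻¹ = 0` makes `u i = 0` exactly when `val i = 0`.
  set u : n → m → ℝ := fun i => (s.val i)⁻¹ • X *ᵥ s.vec i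
  have hu : ∀ i j, u i ⬝ᵥ u j = if i = j then (s.val i)⁻¹ ^ 2 * s.val i ^ 2 else 0 := by
    intro i j
    simp only [u, smul_dotProduct, dotProduct_smul, s.dotProduct_mulVec_vec, smul_eq_mul]
    split_ifs with h
    · rw [h]; ring
    · ring
  refine ⟨∑ i, vecMulVec (u i) (s.vec i), fun w => ?_, ?_⟩
  · rw [sum_mulVec]
    simp only [vecMulVec_mulVec, op_smul_eq_smul]
    rw [← s.sum_sq_dotProduct w]
    refine sum_smul_dotProduct_sum_smul_le _ u (fun i j h => by rw [hu, if_neg h]) fun i => ?_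
    rw [hu, if_pos rfl, ← mul_pow, inv_mul_eq_div]
    exact pow_le_one₀ (div_nonneg (s.val_nonneg i) (s.val_nonneg i)) (div_self_le_one _)
  · simp only [transpose_sum, Matrix.sum_mul, trace_sum, transpose_vecMulVec, vecMulVec_mul,
      trace_vecMulVec]
    refine Finset.sum_congr rfl fun i _ => ?_
    rw [dotProduct_comm, ← dotProduct_mulVec, smul_dotProduct, s.dotProduct_mulVec_vec, if_pos rfl,
      smul_eq_mul, sq, ← mul_assoc, inv_mul_mul_self]

end SingularSystem

section Spectral

variable [DecidableEq n]

noncomputable def singularSystem (X : Matrix m n ℝ) : SingularSystem X where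
  vec i := (isHermitian_transpose_mul_self X).eigenvectorBasis i
  val i := √((isHermitian_transpose_mul_self X).eigenvalues i)
  sum_vecMulVec := by
    set hX := isHermitian_transpose_mul_self X
    have hU := Unitary.coe_mul_star_self hX.eigenvectorUnitary
    ext a b
    rw [← hU]
    simp [Matrix.sum_apply, vecMulVec_apply, mul_apply, star_apply]
  val_nonneg i := Real.sqrt_nonneg _
  dotProduct_mulVec_vec i j := by
    set hX := isHermitian_transpose_mul_self X
    have horth := congr_fun₂ (Unitary.coe_star_mul_self hX.eigenvectorUnitary) i j
    simp only [mul_apply, star_apply, star_trivial, one_apply,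
      IsHermitian.eigenvectorUnitary_apply] at horth
    have hval : 0 ≤ hX.eigenvalues i := eigenvalues_conjTranspose_mul_self_nonneg X i
    rw [_root_.mulVec_dotProduct_mulVec, hX.mulVec_eigenvectorBasis, dotProduct_smul,
      Real.sq_sqrt hval, dotProduct, horth]
    split_ifs with h
    · rw [h, smul_eq_mul, mul_one]
    · rw [smul_zero]

lemma nuclearNorm_eq_sum_singularSystem_val (X : Matrix m n ℝ) :
    nuclearNorm X = ∑ i, (singularSystem X).val i := rfl

end Spectral

lemma trace_transpose_mul_mul_mul_eq (P : Matrix l l ℝ) (B : Matrix l n ℝ) (Q : Matrix n n ℝ)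
    (X : Matrix l n ℝ) : trace ((P * B * Q)ᵀ * X) = trace (Bᵀ * (Pᵀ * X * Qᵀ)) := by
  rw [transpose_mul, transpose_mul, Matrix.mul_assoc, Matrix.mul_assoc, trace_mul_comm,
    Matrix.mul_assoc, Matrix.mul_assoc]

section NuclearNorm

variable [DecidableEq n]

lemma trace_transpose_mul_le_nuclearNorm {B : Matrix m n ℝ} (hB : IsContraction B)
    (X : Matrix m n ℝ) : trace (Bᵀ * X) ≤ nuclearNorm X := by
  rw [nuclearNorm_eq_sum_singularSystem_val]
  exact (singularSystem X).trace_transpose_mul_le hB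

lemma exists_isContraction_trace_transpose_mul_eq_nuclearNorm (X : Matrix m n ℝ) :
    ∃ B : Matrix m n ℝ, IsContraction B ∧ trace (Bᵀ * X) = nuclearNorm X := by
  rw [nuclearNorm_eq_sum_singularSystem_val]
  exact (singularSystem X).exists_isContraction_trace_transpose_mul_eq

lemma nuclearNorm_add_le (X Y : Matrix m n ℝ) :
    nuclearNorm (X + Y) ≤ nuclearNorm X + nuclearNorm Y := by
  obtain ⟨B, hB, hBXY⟩ := exists_isContraction_trace_transpose_mul_eq_nuclearNorm (X + Y)
  rw [← hBXY, Matrix.mul_add, trace_add]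
  exact add_le_add (trace_transpose_mul_le_nuclearNorm hB X)
    (trace_transpose_mul_le_nuclearNorm hB Y)

lemma nuclearNorm_neg (X : Matrix m n ℝ) : nuclearNorm (-X) = nuclearNorm X := by
  simp only [nuclearNorm, transpose_neg, Matrix.neg_mul, Matrix.mul_neg, neg_neg]

end NuclearNorm

lemma mul_eq_self_of_range_mulVecLin_le {α : Type*} [CommSemiring α] {P : Matrix m m α}
    {Z : Matrix m n α} (hP : P * P = P)
    (h : LinearMap.range Z.mulVecLin ≤ LinearMap.range P.mulVecLin) : P * Z = Z :=
  ext_iff_mulVec.2 fun v => by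
    obtain ⟨w, hw⟩ := h ⟨v, rfl⟩
    rw [mulVecLin_apply, mulVecLin_apply] at hw
    rw [← mulVec_mulVec, ← hw, mulVec_mulVec, hP]

section Pinching

variable [DecidableEq m] [DecidableEq n] {P : Matrix m m ℝ} {Q : Matrix n n ℝ}

lemma isContraction_mul_mul_add_one_sub_mul_mul (hP : IsStarProjection P)
    (hQ : IsStarProjection Q) {B₁ B₂ : Matrix m n ℝ} (h₁ : IsContraction B₁)
    (h₂ : IsContraction B₂) : IsContraction (P * B₁ * Q + (1 - P) * B₂ * (1 - Q)) := fun v => by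
  have ha := hP.isContraction.mul h₁ (Q *ᵥ v)
  have hb := hP.one_sub.isContraction.mul h₂ ((1 - Q) *ᵥ v)
  have hab := hP.mulVec_dotProduct_one_sub_mulVec (B₁ *ᵥ Q *ᵥ v) (B₂ *ᵥ (1 - Q) *ᵥ v)
  simp only [← mulVec_mulVec] at ha hb
  rw [add_mulVec, ← mulVec_mulVec, ← mulVec_mulVec, ← mulVec_mulVec, ← mulVec_mulVec,
    dotProduct_add, add_dotProduct, add_dotProduct, dotProduct_comm ((1 - P) *ᵥ _), hab,
    ← hQ.dotProduct_add_dotProduct_one_sub v]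
  linarith

theorem nuclearNorm_mul_mul_add_nuclearNorm_le (hP : IsStarProjection P)
    (hQ : IsStarProjection Q) (X : Matrix m n ℝ) :
    nuclearNorm (P * X * Q) + nuclearNorm ((1 - P) * X * (1 - Q)) ≤ nuclearNorm X := by
  obtain ⟨B₁, h₁, hB₁⟩ := exists_isContraction_trace_transpose_mul_eq_nuclearNorm (P * X * Q)
  obtain ⟨B₂, h₂, hB₂⟩ :=
    exists_isContraction_trace_transpose_mul_eq_nuclearNorm ((1 - P) * X * (1 - Q))
  calc nuclearNorm (P * X * Q) + nuclearNorm ((1 - P) * X * (1 - Q))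
      = trace ((P * B₁ * Q + (1 - P) * B₂ * (1 - Q))ᵀ * X) := by
        rw [transpose_add, Matrix.add_mul, trace_add, trace_transpose_mul_mul_mul_eq,
          trace_transpose_mul_mul_mul_eq, hP.transpose_eq, hQ.transpose_eq,
          hP.one_sub.transpose_eq, hQ.one_sub.transpose_eq, hB₁, hB₂]
    _ ≤ nuclearNorm X := trace_transpose_mul_le_nuclearNorm
        (isContraction_mul_mul_add_one_sub_mul_mul hP hQ h₁ h₂) X

end Pinching

theorem stmt5_general (n m : ℕ)
    (A : Matrix (Fin n) (Fin n) ℝ →ₗ[ℝ] (Fin m → ℝ))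
    (P Q : Matrix (Fin n) (Fin n) ℝ)
    (hPSymm : Pᵀ = P) (hPIdem : P * P = P)
    (hQSymm : Qᵀ = Q) (hQIdem : Q * Q = Q)
    (hcond : ∀ Y : Matrix (Fin n) (Fin n) ℝ, A Y = 0 →
      nuclearNorm (P * Y * Q) ≤ nuclearNorm ((1 - P) * Y * (1 - Q))) :
    ∀ Z : Matrix (Fin n) (Fin n) ℝ,
      LinearMap.range Z.mulVecLin = LinearMap.range P.mulVecLin →
      LinearMap.range Zᵀ.mulVecLin = LinearMap.range Q.mulVecLin →
      ∀ Y : Matrix (Fin n) (Fin n) ℝ, A Y = 0 →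
        nuclearNorm Z ≤ nuclearNorm (Z + Y) := by
  intro Z hcol hrow Y hY
  have hPZ : P * Z = Z := mul_eq_self_of_range_mulVecLin_le hPIdem hcol.le
  have hZQ : Z * Q = Z := by
    simpa only [transpose_mul, transpose_transpose, hQSymm] using
      congrArg transpose (mul_eq_self_of_range_mulVecLin_le hQIdem hrow.le)
  have hin : P * (Z + Y) * Q = Z + P * Y * Q := by
    rw [Matrix.mul_add, Matrix.add_mul, hPZ, hZQ]
  have hout : (1 - P) * (Z + Y) * (1 - Q) = (1 - P) * Y * (1 - Q) := by
    rw [Matrix.mul_add, sub_mul, one_mul, hPZ, sub_self, zero_add]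
  calc nuclearNorm Z = nuclearNorm (Z + P * Y * Q + -(P * Y * Q)) := by
        rw [add_neg_cancel_right]
    _ ≤ nuclearNorm (Z + P * Y * Q) + nuclearNorm (P * Y * Q) := by
        simpa only [nuclearNorm_neg] using nuclearNorm_add_le (Z + P * Y * Q) (-(P * Y * Q))
    _ ≤ nuclearNorm (Z + P * Y * Q) + nuclearNorm ((1 - P) * Y * (1 - Q)) := by
        gcongr
        exact hcond Y hY
    _ = nuclearNorm (P * (Z + Y) * Q) + nuclearNorm ((1 - P) * (Z + Y) * (1 - Q)) := by
        rw [hin, hout]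
    _ ≤ nuclearNorm (Z + Y) :=
        nuclearNorm_mul_mul_add_nuclearNorm_le (isStarProjection_of_transpose_eq hPSymm hPIdem)
          (isStarProjection_of_transpose_eq hQSymm hQIdem) (Z + Y)

/-- If for every `Y` in the null space of `A` we have
`‖(I−P) Y (I−Q)‖_* ≥ ‖P Y Q‖_*`, then for every matrix `Z` whose column space is
the range of `P` and whose row space is the range of `Q`, and every `Y` in the
null space of `A`, `‖Z + Y‖_* ≥ ‖Z‖_*`. -/
theorem stmt5 (n m r : ℕ) (hr : r ≤ n)
    (A : Matrix (Fin n) (Fin n) ℝ →ₗ[ℝ] (Fin m → ℝ))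
    (P Q : Matrix (Fin n) (Fin n) ℝ)
    (hPSymm : Pᵀ = P) (hPIdem : P * P = P) (hPrank : P.rank = r)
    (hQSymm : Qᵀ = Q) (hQIdem : Q * Q = Q) (hQrank : Q.rank = r)
    (hcond : ∀ Y : Matrix (Fin n) (Fin n) ℝ, A Y = 0 →
      nuclearNorm (P * Y * Q) ≤ nuclearNorm ((1 - P) * Y * (1 - Q))) :
    ∀ Z : Matrix (Fin n) (Fin n) ℝ,
      LinearMap.range Z.mulVecLin = LinearMap.range P.mulVecLin →
      LinearMap.range Zᵀ.mulVecLin = LinearMap.range Q.mulVecLin →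
      ∀ Y : Matrix (Fin n) (Fin n) ℝ, A Y = 0 →
        nuclearNorm Z ≤ nuclearNorm (Z + Y) :=
  stmt5_general n m A P Q hPSymm hPIdem hQSymm hQIdem hcond
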